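/- arXiv:2405.00427 — 7 statements merged into one kernel-verified Lean document; each statement's English description precedes it below -/
import Mathlib

section
/- Let H = (V, E) be a 3-uniform hypergraph whose vertex set is partitioned as V = V_B ∪ V_U (with V_B ∩ V_U = ∅), and let H_B = (V_B, E(V_B)) be the subhypergraph induced on V_B, whose edges are exactly the edges of E contained in V_B. Suppose c_U is a partial LO coloring of H, using colors from a finite linearly ordered set C_U, that assigns colors exactly to the vertices of V_U, and suppose c_B is an LO coloring of H_B using colors from a finite linearly ordered set C_B. Then H admits an LO coloring using at most |C_U| + |C_B| colors. -/
/-- `c` is an LO coloring of the 3-uniform hypergraph with edge set `E`: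
in every edge there is a unique vertex attaining the maximum color. -/
def IsLOColoring {V C : Type*} [DecidableEq V] [LinearOrder C]
    (E : Finset (Finset V)) (c : V → C) : Prop :=
  ∀ e ∈ E, ∃ a ∈ e, ∀ b ∈ e, b ≠ a → c b < c a

/-- `c` is a partial LO coloring of the hypergraph with edge set `E`, coloring
exactly the vertices of `S`: for every edge meeting `S`, the maximum color on
`e ∩ S` is attained by exactly one vertex of `e ∩ S`. -/
def IsPartialLOColoring {V C : Type*} [DecidableEq V] [LinearOrder C]
    (E : Finset (Finset V)) (S : Finset V) (c : V → C) : Prop :=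
  ∀ e ∈ E, (e ∩ S).Nonempty → ∃ a ∈ e ∩ S, ∀ b ∈ e ∩ S, b ≠ a → c b < c a

theorem combine_partial_and_balanced_coloring
    {V C_U C_B : Type*} [Fintype V] [DecidableEq V]
    [Fintype C_U] [LinearOrder C_U] [Fintype C_B] [LinearOrder C_B]
    (E : Finset (Finset V)) (hE : ∀ e ∈ E, e.card = 3)
    (V_B V_U : Finset V) (hdisj : Disjoint V_B V_U)
    (hcover : V_B ∪ V_U = Finset.univ)
    (c_U : V → C_U) (hcU : IsPartialLOColoring E V_U c_U)
    (c_B : V → C_B)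
    (hcB : IsLOColoring (E.filter (fun e => e ⊆ V_B)) c_B) :
    ∃ c : V → Fin (Fintype.card C_U + Fintype.card C_B), IsLOColoring E c := by
  classical
  let eU : C_U ≃o Fin (Fintype.card C_U) := (monoEquivOfFin C_U rfl).symm
  let eB : C_B ≃o Fin (Fintype.card C_B) := (monoEquivOfFin C_B rfl).symm
  refine ⟨fun v => if v ∈ V_U then
      ⟨Fintype.card C_B + (eU (c_U v)).val, by have := (eU (c_U v)).isLt; omega⟩
    else ⟨(eB (c_B v)).val, by have := (eB (c_B v)).isLt; omega⟩, ?_⟩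
  intro e he
  by_cases h : (e ∩ V_U).Nonempty
  · obtain ⟨a, ha, hmax⟩ := hcU e he h
    rw [Finset.mem_inter] at ha
    refine ⟨a, ha.1, ?_⟩
    intro b hb hba
    simp only [if_pos ha.2]
    by_cases hbU : b ∈ V_U
    · simp only [if_pos hbU]
      have h1 := hmax b (Finset.mem_inter.mpr ⟨hb, hbU⟩) hba
      have h2 : (eU (c_U b)).val < (eU (c_U a)).val := eU.lt_iff_lt.mpr h1
      exact Fin.mk_lt_mk.mpr (by omega)
    · simp only [if_neg hbU]
      have := (eB (c_B b)).isLt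
      exact Fin.mk_lt_mk.mpr (by omega)
  · have hsub : e ⊆ V_B := by
      intro v hv
      by_contra hvB
      have hvu : v ∈ V_B ∪ V_U := by rw [hcover]; exact Finset.mem_univ v
      rcases Finset.mem_union.mp hvu with h1 | h1
      · exact hvB h1
      · exact h ⟨v, Finset.mem_inter.mpr ⟨hv, h1⟩⟩
    obtain ⟨a, ha, hmax⟩ := hcB e (Finset.mem_filter.mpr ⟨he, hsub⟩)
    have haU : a ∉ V_U := fun hh => Finset.disjoint_left.mp hdisj (hsub ha) hh
    refine ⟨a, ha, ?_⟩
    intro b hb hba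
    have hbU : b ∉ V_U := fun hh => Finset.disjoint_left.mp hdisj (hsub hb) hh
    simp only [if_neg haU, if_neg hbU]
    have h1 := hmax b hb hba
    have h2 : (eB (c_B b)).val < (eB (c_B a)).val := eB.lt_iff_lt.mpr h1
    exact Fin.mk_lt_mk.mpr h2
end

section
/- Let H = (V, E) be a 3-uniform hypergraph, let S₂ ⊆ V be an even independent set of H, and let H₂ = (V₂, E₂) be the subhypergraph induced on V₂ = V \ S₂ (its edges are the edges of E contained in V₂). If c is an LO coloring of H₂ using colors from a linearly ordered set C₂, and c₂ is a color strictly smaller than every color in C₂, then the coloring of H that assigns c₂ to every vertex of S₂ and agrees with c on V₂ is an LO coloring of H. -/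
theorem extend_LO_coloring_even_independent_set
    {V C : Type*} [DecidableEq V] [LinearOrder C]
    (E : Finset (Finset V)) (hE : ∀ e ∈ E, e.card = 3)
    (S₂ : Finset V) (hS₂ : ∀ e ∈ E, (e ∩ S₂).card = 0 ∨ (e ∩ S₂).card = 2)
    (C₂ : Set C) (c : V → C) (hc : ∀ v, v ∉ S₂ → c v ∈ C₂)
    (hLO : IsLOColoring (E.filter (fun e => ∀ v ∈ e, v ∉ S₂)) c)
    (c₂ : C) (hc₂ : ∀ x ∈ C₂, c₂ < x) :
    IsLOColoring E (fun v => if v ∈ S₂ then c₂ else c v) := by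
  intro e he
  rcases hS₂ e he with h0 | h2
  · -- no vertex of e in S₂
    have hdisj : ∀ v ∈ e, v ∉ S₂ := by
      intro v hv hvS
      have : v ∈ e ∩ S₂ := Finset.mem_inter.2 ⟨hv, hvS⟩
      simp [Finset.card_eq_zero.1 h0] at this
    obtain ⟨a, ha, hmax⟩ := hLO e (Finset.mem_filter.2 ⟨he, hdisj⟩)
    refine ⟨a, ha, fun b hb hba => ?_⟩
    simpa [hdisj a ha, hdisj b hb] using hmax b hb hba
  · -- exactly one vertex of e outside S₂
    have hcard : (e \ S₂).card = 1 := by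
      have h3 := hE e he
      have := Finset.card_sdiff_add_card_inter e S₂
      omega
    obtain ⟨a, ha⟩ := Finset.card_eq_one.1 hcard
    have haS : a ∈ e \ S₂ := ha ▸ Finset.mem_singleton_self a
    have hae : a ∈ e := (Finset.mem_sdiff.1 haS).1
    have haS₂ : a ∉ S₂ := (Finset.mem_sdiff.1 haS).2
    refine ⟨a, hae, fun b hb hba => ?_⟩
    have hbS₂ : b ∈ S₂ := by
      by_contra hbS
      have : b ∈ e \ S₂ := Finset.mem_sdiff.2 ⟨hb, hbS⟩
      rw [ha, Finset.mem_singleton] at this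
      exact hba this
    simpa [hbS₂, haS₂] using hc₂ _ (hc a haS₂)
end

section
/- Define real sequences (ℓ_j) and (u_j) by ℓ₀ = −1, u₀ = 1, and for each j ≥ 0: if j is odd then ℓ_{j+1} = (ℓ_j + u_j)/2 and u_{j+1} = u_j, while if j is even then ℓ_{j+1} = ℓ_j and u_{j+1} = (ℓ_j + u_j)/2; let I_j = [ℓ_j, u_j]. Let γ_a, γ_b, γ_c be real numbers with γ_a + γ_b + γ_c = −1. Then for every integer j ≥ 0, if γ_a, γ_b, γ_c ∈ I_j, then at most one of γ_a, γ_b, γ_c lies in I_j \ I_{j+1}. -/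
/-! The bisection preserves a linear relation between the endpoints: `2 ℓ_j + u_j = -1` for even `j`
and `ℓ_j + 2 u_j = -1` for odd `j`. At an even step the points leaving `I_j` lie above its midpoint,
so two of them together with a third point of `I_j` sum to more than `(ℓ_j + u_j) + ℓ_j = -1`;
symmetrically, at an odd step they lie below the midpoint and the sum is less than `-1`. -/

namespace Set

variable {α : Type*} [LinearOrder α] {a b m x : α}

lemma lt_of_mem_Icc_diff_Icc_left (hx : x ∈ Icc a b \ Icc a m) : m < x :=
  not_le.mp fun hxm => hx.2 ⟨hx.1.1, hxm⟩

lemma lt_of_mem_Icc_diff_Icc_right (hx : x ∈ Icc a b \ Icc m b) : x < m :=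
  not_le.mp fun hmx => hx.2 ⟨hmx, hx.1.2⟩

end Set

lemma bisection_endpoint_relation (l u : ℕ → ℝ) (hl0 : l 0 = -1) (hu0 : u 0 = 1)
    (hodd : ∀ j : ℕ, Odd j → l (j + 1) = (l j + u j) / 2 ∧ u (j + 1) = u j)
    (heven : ∀ j : ℕ, Even j → l (j + 1) = l j ∧ u (j + 1) = (l j + u j) / 2) (j : ℕ) :
    (Even j → 2 * l j + u j = -1) ∧ (Odd j → l j + 2 * u j = -1) := by
  induction j with
  | zero => exact ⟨fun _ => by rw [hl0, hu0]; norm_num, fun h => absurd h Nat.not_odd_zero⟩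
  | succ n ih =>
    rcases Nat.even_or_odd n with hn | hn
    · obtain ⟨hl, hu⟩ := heven n hn
      have := ih.1 hn
      refine ⟨fun h => absurd hn (Nat.even_add_one.mp h), fun _ => ?_⟩
      rw [hl, hu]
      linarith
    · obtain ⟨hl, hu⟩ := hodd n hn
      have := ih.2 hn
      refine ⟨fun _ => ?_, fun h => absurd hn.add_one (Nat.not_even_iff_odd.mpr h)⟩
      rw [hl, hu]
      linarith

lemma bisection_sum_ne_of_two_mem_diff (l u : ℕ → ℝ) (hl0 : l 0 = -1) (hu0 : u 0 = 1)
    (hodd : ∀ j : ℕ, Odd j → l (j + 1) = (l j + u j) / 2 ∧ u (j + 1) = u j)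
    (heven : ∀ j : ℕ, Even j → l (j + 1) = l j ∧ u (j + 1) = (l j + u j) / 2) (j : ℕ)
    ⦃x y z : ℝ⦄ (hx : x ∈ Set.Icc (l j) (u j) \ Set.Icc (l (j + 1)) (u (j + 1)))
    (hy : y ∈ Set.Icc (l j) (u j) \ Set.Icc (l (j + 1)) (u (j + 1)))
    (hz : z ∈ Set.Icc (l j) (u j)) : x + y + z ≠ -1 := by
  have hrel := bisection_endpoint_relation l u hl0 hu0 hodd heven j
  rcases Nat.even_or_odd j with hj | hj
  · obtain ⟨hl, hu⟩ := heven j hj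
    rw [hl, hu] at hx hy
    have := Set.lt_of_mem_Icc_diff_Icc_left hx
    have := Set.lt_of_mem_Icc_diff_Icc_left hy
    linarith [hrel.1 hj, hz.1]
  · obtain ⟨hl, hu⟩ := hodd j hj
    rw [hl, hu] at hx hy
    have := Set.lt_of_mem_Icc_diff_Icc_right hx
    have := Set.lt_of_mem_Icc_diff_Icc_right hy
    linarith [hrel.2 hj, hz.2]

theorem bisection_difference_at_most_one
    (l u : ℕ → ℝ) (hl0 : l 0 = -1) (hu0 : u 0 = 1)
    (hodd : ∀ j : ℕ, Odd j → l (j + 1) = (l j + u j) / 2 ∧ u (j + 1) = u j)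
    (heven : ∀ j : ℕ, Even j → l (j + 1) = l j ∧ u (j + 1) = (l j + u j) / 2)
    (γa γb γc : ℝ) (hsum : γa + γb + γc = -1) :
    ∀ j : ℕ,
      γa ∈ Set.Icc (l j) (u j) → γb ∈ Set.Icc (l j) (u j) →
      γc ∈ Set.Icc (l j) (u j) →
      ¬(γa ∈ Set.Icc (l j) (u j) \ Set.Icc (l (j + 1)) (u (j + 1)) ∧
        γb ∈ Set.Icc (l j) (u j) \ Set.Icc (l (j + 1)) (u (j + 1))) ∧
      ¬(γa ∈ Set.Icc (l j) (u j) \ Set.Icc (l (j + 1)) (u (j + 1)) ∧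
        γc ∈ Set.Icc (l j) (u j) \ Set.Icc (l (j + 1)) (u (j + 1))) ∧
      ¬(γb ∈ Set.Icc (l j) (u j) \ Set.Icc (l (j + 1)) (u (j + 1)) ∧
        γc ∈ Set.Icc (l j) (u j) \ Set.Icc (l (j + 1)) (u (j + 1))) := by
  intro j ha hb hc
  have key := bisection_sum_ne_of_two_mem_diff l u hl0 hu0 hodd heven j
  exact ⟨fun ⟨ha', hb'⟩ => key ha' hb' hc hsum,
    fun ⟨ha', hc'⟩ => key ha' hc' hb (by linarith),
    fun ⟨hb', hc'⟩ => key hb' hc' ha (by linarith)⟩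
end

section
/- Let H = (V, E) be a 3-uniform hypergraph and let γ : V → ℝ satisfy γ_a ∈ [−1, 1] for all a ∈ V and γ_a + γ_b + γ_c = −1 for every edge {a, b, c} ∈ E. Let 0 < ε < 1. Then there exists a partial LO coloring of H, using at most ⌈log₂(4/(3ε))⌉ colors, that assigns a color to every vertex a ∈ V with γ_a ∉ [−1/3 − ε, −1/3 + ε]. -/
/-! Put `v := (3/4)(γ + 1/3)`, so `v ∈ [-1/2, 1]` and `v` sums to zero on every edge. Give a vertex
with `v ≠ 0` the level `κ ∈ {c, c + 1}`, where `2^(c-1) < |v| ≤ 2^c`, chosen so that `κ` is even exactly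
when `v > 0`. If two vertices of an edge share the top level `κ`, they have the same sign, so the
third has `|v| > 2^(κ-1)` and the opposite sign, hence a strictly larger level. Thus on every edge
the largest level is attained once, and the levels `κ ∈ (⌊log₂(3ε/4)⌋, 0]` of the unbalanced
vertices give the colors. -/

open Real

namespace Finset

theorem exists_eq_insert_insert_singleton_of_card_eq_three {V : Type*} [DecidableEq V]
    {e : Finset V} (he : e.card = 3) {x y : V} (hx : x ∈ e) (hy : y ∈ e) (hxy : x ≠ y) :
    ∃ z, x ≠ z ∧ y ≠ z ∧ e = {x, y, z} := by
  have hcard : ((e.erase x).erase y).card = 1 := by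
    rw [card_erase_of_mem (mem_erase.2 ⟨hxy.symm, hy⟩), card_erase_of_mem hx, he]
  obtain ⟨z, hz⟩ := card_eq_one.1 hcard
  have hze : z ∈ (e.erase x).erase y := hz ▸ mem_singleton_self z
  simp only [mem_erase] at hze
  obtain ⟨hzy, hzx, hze⟩ := hze
  refine ⟨z, Ne.symm hzx, Ne.symm hzy, (eq_of_subset_of_card_le ?_ ?_).symm⟩
  · simp [insert_subset_iff, hx, hy, hze]
  · rw [he, card_eq_three.2 ⟨x, y, z, hxy, Ne.symm hzx, Ne.symm hzy, rfl⟩]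

end Finset

theorem Real.natCast_natCeil_logb_inv {b : ℕ} (hb : 1 < b) {r : ℝ} (h₀ : 0 < r) (h₁ : r ≤ 1) :
    (⌈logb b r⁻¹⌉₊ : ℤ) = -Int.log b r := by
  rw [Int.natCast_ceil_eq_ceil, ceil_logb_natCast (inv_nonneg.2 h₀.le), Int.clog_inv]
  exact logb_nonneg (by exact_mod_cast hb) ((one_le_inv₀ h₀).2 h₁)

noncomputable def signedDyadicLevel (x : ℝ) : ℤ :=
  if Even (Int.clog 2 |x|) ↔ 0 < x then Int.clog 2 |x| else Int.clog 2 |x| + 1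

local notation "κ" => signedDyadicLevel

theorem even_signedDyadicLevel_iff (x : ℝ) : Even (κ x) ↔ 0 < x := by
  unfold signedDyadicLevel
  split_ifs with h
  · exact h
  · rw [Int.even_add_one]
    tauto

theorem clog_abs_le_signedDyadicLevel (x : ℝ) : Int.clog 2 |x| ≤ κ x := by
  unfold signedDyadicLevel; split_ifs <;> omega

theorem signedDyadicLevel_le_clog_abs_add_one (x : ℝ) : κ x ≤ Int.clog 2 |x| + 1 := by
  unfold signedDyadicLevel; split_ifs <;> omega

theorem two_zpow_signedDyadicLevel_sub_two_lt_abs {x : ℝ} (hx : x ≠ 0) : (2 : ℝ) ^ (κ x - 2) < |x| := by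
  have h := Int.zpow_pred_clog_lt_self (R := ℝ) (b := 2) one_lt_two (abs_pos.2 hx)
  push_cast at h
  refine lt_of_le_of_lt (zpow_le_zpow_right₀ one_le_two ?_) h
  linarith [signedDyadicLevel_le_clog_abs_add_one x]

theorem lt_signedDyadicLevel_of_two_zpow_lt_abs {x : ℝ} {n : ℤ} (h : (2 : ℝ) ^ n < |x|) : n < κ x := by
  have hx : 0 < |x| := (zpow_pos two_pos n).trans h
  have := (Int.zpow_lt_iff_lt_clog (R := ℝ) (b := 2) one_lt_two hx).1 (by exact_mod_cast h)
  linarith [clog_abs_le_signedDyadicLevel x]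

theorem signedDyadicLevel_nonpos {x : ℝ} (hx : x ≠ 0) (h₁ : -(1 / 2) ≤ x) (h₂ : x ≤ 1) : κ x ≤ 0 := by
  have hc (n : ℤ) (h : |x| ≤ (2 : ℝ) ^ n) : Int.clog 2 |x| ≤ n :=
    (Int.le_zpow_iff_clog_le one_lt_two (abs_pos.2 hx)).1 (by exact_mod_cast h)
  have hup := signedDyadicLevel_le_clog_abs_add_one x
  rcases hx.lt_or_gt with hneg | hpos
  · have := hc (-1) (by rw [abs_of_neg hneg]; norm_num; linarith)
    omega
  · have := hc 0 (by rw [abs_of_pos hpos]; simpa using h₂)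
    have heven := (even_signedDyadicLevel_iff x).2 hpos
    have hne : κ x ≠ 1 := fun h => by simp [h] at heven
    omega

theorem signedDyadicLevel_lt_of_add_add_eq_zero {x y z : ℝ} (hx : x ≠ 0) (hy : y ≠ 0) (hxy : κ x = κ y)
    (h : x + y + z = 0) : z ≠ 0 ∧ κ x < κ z := by
  have hsign : 0 < x ↔ 0 < y := (even_signedDyadicLevel_iff x).symm.trans (hxy ▸ even_signedDyadicLevel_iff y)
  have hsign_abs : (0 < z ↔ ¬ 0 < x) ∧ |z| = |x| + |y| := by
    rcases hx.lt_or_gt with hx' | hx'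
    · have hy' : y < 0 := hy.lt_or_gt.resolve_right fun h => lt_asymm hx' (hsign.2 h)
      have hz' : 0 < z := by linarith
      refine ⟨by simp [hz', hx'.le], ?_⟩
      rw [abs_of_neg hx', abs_of_neg hy', abs_of_pos hz']; linarith
    · have hy' : 0 < y := hsign.1 hx'
      have hz' : z < 0 := by linarith
      refine ⟨by simp [hz'.le, hx'], ?_⟩
      rw [abs_of_pos hx', abs_of_pos hy', abs_of_neg hz']; linarith
  obtain ⟨hzsign, habs⟩ := hsign_abs
  have hlt : (2 : ℝ) ^ (κ x - 1) < |z| := by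
    have h₁ := two_zpow_signedDyadicLevel_sub_two_lt_abs hx
    have h₂ := two_zpow_signedDyadicLevel_sub_two_lt_abs hy
    rw [← hxy] at h₂
    have : (2 : ℝ) ^ (κ x - 1) = 2 ^ (κ x - 2) + 2 ^ (κ x - 2) := by
      rw [show κ x - 1 = κ x - 2 + 1 by ring, zpow_add_one₀ two_ne_zero]; ring
    linarith
  have hz : z ≠ 0 := abs_pos.1 ((zpow_pos two_pos _).trans hlt)
  have hle : κ x ≤ κ z := by linarith [lt_signedDyadicLevel_of_two_zpow_lt_abs hlt]
  refine ⟨hz, hle.lt_of_ne fun heq => ?_⟩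
  have hxz := even_signedDyadicLevel_iff x
  rw [heq, even_signedDyadicLevel_iff z] at hxz
  tauto

section Coloring

variable {V : Type*} [DecidableEq V] {E : Finset (Finset V)}

theorem isPartialLOColoring_signedDyadicLevel [Fintype V] (hE : ∀ e ∈ E, e.card = 3)
    {v : V → ℝ} (hv : ∀ a b c : V, a ≠ b → a ≠ c → b ≠ c →
      ({a, b, c} : Finset V) ∈ E → v a + v b + v c = 0) (lo : ℤ) :
    IsPartialLOColoring E {a | v a ≠ 0 ∧ lo < κ (v a)} (fun a => κ (v a)) := by
  intro e he hne
  obtain ⟨x, hx, hmax⟩ := Finset.exists_max_image _ (fun a => κ (v a)) hne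
  refine ⟨x, hx, fun y hy hyx => (hmax y hy).lt_of_ne fun hxy => ?_⟩
  simp only [Finset.mem_inter, Finset.mem_filter, Finset.mem_univ, true_and] at hx hy
  obtain ⟨z, hxz, hyz, rfl⟩ :=
    Finset.exists_eq_insert_insert_singleton_of_card_eq_three (hE e he) hx.1 hy.1 (Ne.symm hyx)
  obtain ⟨hz, hlt⟩ := signedDyadicLevel_lt_of_add_add_eq_zero hx.2.1 hy.2.1 hxy.symm
    (hv x y z (Ne.symm hyx) hxz hyz he)
  have hzS : z ∈ {x, y, z} ∩ ({a | v a ≠ 0 ∧ lo < κ (v a)} : Finset V) := by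
    simp [hz, hx.2.2.trans hlt]
  exact (hmax z hzS).not_gt hlt

theorem IsPartialLOColoring.exists_fin {S : Finset V} {c : V → ℤ}
    (hc : IsPartialLOColoring E S c) {lo : ℤ} {k : ℕ} (hk : 0 < k)
    (hS : ∀ a ∈ S, lo < c a ∧ c a ≤ lo + k) :
    ∃ c' : V → Fin k, IsPartialLOColoring E S c' := by
  refine ⟨fun a => ⟨min (c a - lo - 1).toNat (k - 1), by omega⟩, fun e he hne => ?_⟩
  obtain ⟨a, ha, hmax⟩ := hc e he hne
  refine ⟨a, ha, fun b hb hba => ?_⟩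
  have := hmax b hb hba
  have := hS a (Finset.mem_inter.1 ha).2
  have := hS b (Finset.mem_inter.1 hb).2
  rw [Fin.mk_lt_mk]
  omega

end Coloring

theorem partial_LO_coloring_of_unbalanced_vertices
    {V : Type*} [Fintype V] [DecidableEq V]
    (E : Finset (Finset V)) (hE : ∀ e ∈ E, e.card = 3)
    (γ : V → ℝ) (hγ : ∀ a, γ a ∈ Set.Icc (-1 : ℝ) 1)
    (hsum : ∀ a b c : V, a ≠ b → a ≠ c → b ≠ c →
      ({a, b, c} : Finset V) ∈ E → γ a + γ b + γ c = -1)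
    (ε : ℝ) (hε0 : 0 < ε) (hε1 : ε < 1) :
    ∃ (k : ℕ) (S : Finset V) (c : V → Fin k),
      k ≤ ⌈Real.logb 2 (4 / (3 * ε))⌉₊ ∧
      (∀ a : V, γ a ∉ Set.Icc (-1/3 - ε) (-1/3 + ε) → a ∈ S) ∧
      IsPartialLOColoring E S c := by
  set v : V → ℝ := fun a => 3 / 4 * (γ a + 1 / 3)
  set lo := Int.log 2 (3 * ε / 4)
  have hK : (⌈logb 2 (4 / (3 * ε))⌉₊ : ℤ) = -lo := by
    have := natCast_natCeil_logb_inv one_lt_two (r := 3 * ε / 4) (by positivity) (by linarith)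
    rwa [inv_div, Nat.cast_ofNat] at this
  have hlo : (2 : ℝ) ^ lo ≤ 3 * ε / 4 := by
    simpa using Int.zpow_log_le_self (b := 2) one_lt_two (by positivity : (0 : ℝ) < 3 * ε / 4)
  have hlo_neg : lo < 0 :=
    (Int.lt_zpow_iff_log_lt (b := 2) one_lt_two (by positivity)).1 (by norm_num; linarith)
  have hv : ∀ a b c : V, a ≠ b → a ≠ c → b ≠ c →
      ({a, b, c} : Finset V) ∈ E → v a + v b + v c = 0 := fun a b c hab hac hbc he => by
    have := hsum a b c hab hac hbc he; simp only [v]; linarith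
  have hbig (a : V) (ha : γ a ∉ Set.Icc (-1/3 - ε) (-1/3 + ε)) : (2 : ℝ) ^ lo < |v a| := by
    rw [Set.mem_Icc, not_and_or, not_le, not_le] at ha
    refine hlo.trans_lt (lt_abs.2 ?_)
    simp only [v]
    rcases ha with ha | ha <;> [right; left] <;> linarith
  obtain ⟨c, hc⟩ := (isPartialLOColoring_signedDyadicLevel hE hv lo).exists_fin
    (lo := lo) (k := ⌈logb 2 (4 / (3 * ε))⌉₊) (by omega) fun a ha => by
      simp only [Finset.mem_filter, Finset.mem_univ, true_and] at ha
      have := signedDyadicLevel_nonpos ha.1 (by simp only [v]; linarith [(hγ a).1])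
        (by simp only [v]; linarith [(hγ a).2])
      omega
  refine ⟨_, _, c, le_rfl, fun a ha => ?_, hc⟩
  have hva : v a ≠ 0 := abs_pos.1 ((zpow_pos two_pos _).trans (hbig a ha))
  simpa [hva] using lt_signedDyadicLevel_of_two_zpow_lt_abs (hbig a ha)
end

section
/- Let v_a, v_b, v_c, v_∅ be unit vectors in a real inner product space with v_a + v_b + v_c = −v_∅, and write γ_x = ⟨v_x, v_∅⟩ for x ∈ {a, b, c}. Let 0 < ε ≤ 1/4 and suppose γ_a, γ_b, γ_c ∈ [−1/3 − ε, −1/3 + ε]. For x ∈ {a, b, c} define the unit vector û_x = (v_x − γ_x v_∅)/√(1 − γ_x²). Then ‖û_a + û_b + û_c‖² ≤ 18ε. -/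
/-!
Write `wₓ = vₓ - γₓ • v₀`, so that `ûₓ = wₓ / ‖wₓ‖` with `‖wₓ‖ = √(1 - γₓ²)`. Since
`v_a + v_b + v_c = -v₀`, the three components `wₓ` sum to zero, hence
`û_a + û_b + û_c = (‖w_b‖⁻¹ - ‖w_a‖⁻¹) • w_b + (‖w_c‖⁻¹ - ‖w_a‖⁻¹) • w_c`, whose norm is at most
`(|‖w_a‖ - ‖w_b‖| + |‖w_a‖ - ‖w_c‖|) / ‖w_a‖`. On `γ² ≤ 1/2` the map `γ ↦ √(1 - γ²)` is
1-Lipschitz, so the numerator is at most `4ε`, while `‖w_a‖² ≥ 1/2`; this gives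
`‖û_a + û_b + û_c‖² ≤ 32ε² ≤ 8ε`.
-/

open scoped RealInnerProductSpace

section Normed

variable {E : Type*} [NormedAddCommGroup E] [NormedSpace ℝ E]

lemma norm_inv_sub_inv_smul {w : E} {s t : ℝ} (hw : ‖w‖ = s) (hs : 0 < s) (ht : 0 < t) :
    ‖(s⁻¹ - t⁻¹) • w‖ = |t - s| / t := by
  rw [norm_smul, hw, inv_sub_inv hs.ne' ht.ne', Real.norm_eq_abs, abs_div,
    abs_of_pos (mul_pos hs ht)]
  field_simp

lemma norm_inv_smul_add_add_le_of_add_add_eq_zero {w₁ w₂ w₃ : E} {s₁ s₂ s₃ : ℝ}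
    (hw : w₁ + w₂ + w₃ = 0) (hs₁ : 0 < s₁) (hs₂ : 0 < s₂) (hs₃ : 0 < s₃)
    (hw₂ : ‖w₂‖ = s₂) (hw₃ : ‖w₃‖ = s₃) :
    ‖s₁⁻¹ • w₁ + s₂⁻¹ • w₂ + s₃⁻¹ • w₃‖ ≤ (|s₁ - s₂| + |s₁ - s₃|) / s₁ := by
  have hdecomp : s₁⁻¹ • w₁ + s₂⁻¹ • w₂ + s₃⁻¹ • w₃ =
      (s₂⁻¹ - s₁⁻¹) • w₂ + (s₃⁻¹ - s₁⁻¹) • w₃ := by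
    linear_combination (norm := module) s₁⁻¹ • hw
  calc ‖s₁⁻¹ • w₁ + s₂⁻¹ • w₂ + s₃⁻¹ • w₃‖
      ≤ ‖(s₂⁻¹ - s₁⁻¹) • w₂‖ + ‖(s₃⁻¹ - s₁⁻¹) • w₃‖ := hdecomp ▸ norm_add_le _ _
    _ = (|s₁ - s₂| + |s₁ - s₃|) / s₁ := by
      rw [norm_inv_sub_inv_smul hw₂ hs₂ hs₁, norm_inv_sub_inv_smul hw₃ hs₃ hs₁, add_div]

end Normed

section Inner

variable {E : Type*} [NormedAddCommGroup E] [InnerProductSpace ℝ E]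

lemma norm_sub_inner_smul_sq {e : E} (he : ‖e‖ = 1) (v : E) :
    ‖v - ⟪v, e⟫ • e‖ ^ 2 = ‖v‖ ^ 2 - ⟪v, e⟫ ^ 2 := by
  rw [norm_sub_sq_real, inner_smul_right, norm_smul, he, Real.norm_eq_abs, mul_one, sq_abs]
  ring

lemma sub_inner_smul_add_add_eq_zero {e x y z : E} (he : ‖e‖ = 1) (hsum : x + y + z = -e) :
    (x - ⟪x, e⟫ • e) + (y - ⟪y, e⟫ • e) + (z - ⟪z, e⟫ • e) = 0 := by
  have hinner : ⟪x, e⟫ + ⟪y, e⟫ + ⟪z, e⟫ = -1 := by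
    rw [← inner_add_left, ← inner_add_left, hsum, inner_neg_left, real_inner_self_eq_norm_sq,
      he, one_pow]
  calc (x - ⟪x, e⟫ • e) + (y - ⟪y, e⟫ • e) + (z - ⟪z, e⟫ • e)
      = (x + y + z) - (⟪x, e⟫ + ⟪y, e⟫ + ⟪z, e⟫) • e := by module
    _ = 0 := by rw [hsum, hinner, neg_one_smul, sub_self]

end Inner

lemma abs_sqrt_one_sub_sq_sub_le {x y : ℝ} (hx : x ^ 2 ≤ 1 / 2) (hy : y ^ 2 ≤ 1 / 2) :
    |√(1 - x ^ 2) - √(1 - y ^ 2)| ≤ |x - y| := by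
  set s := √(1 - x ^ 2)
  set t := √(1 - y ^ 2)
  have hs2 : s ^ 2 = 1 - x ^ 2 := Real.sq_sqrt (by linarith)
  have ht2 : t ^ 2 = 1 - y ^ 2 := Real.sq_sqrt (by linarith)
  have hxs : |x| ≤ s := Real.abs_le_sqrt (by linarith)
  have hyt : |y| ≤ t := Real.abs_le_sqrt (by linarith)
  have hst : 0 < s + t :=
    add_pos_of_pos_of_nonneg (Real.sqrt_pos.2 (by linarith)) (Real.sqrt_nonneg _)
  have hfactor : |s - t| * (s + t) = |x - y| * |x + y| := by
    rw [← abs_of_pos hst, ← abs_mul, ← abs_mul, ← abs_neg ((x - y) * (x + y))]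
    congr 1
    linear_combination hs2 - ht2
  refine le_of_mul_le_mul_right ?_ hst
  rw [hfactor]
  gcongr
  exact (abs_add_le x y).trans (add_le_add hxs hyt)

theorem balanced_orthogonal_components_sum_small_general
    {W : Type*} [NormedAddCommGroup W] [InnerProductSpace ℝ W]
    (va vb vc v₀ : W)
    (hvb : ‖vb‖ = 1) (hvc : ‖vc‖ = 1) (hv₀ : ‖v₀‖ = 1)
    (hsum : va + vb + vc = -v₀)
    (ε : ℝ) (hε0 : 0 < ε) (hε : ε ≤ 1/4)
    (γa γb γc : ℝ)
    (hγa : γa = ⟪va, v₀⟫) (hγb : γb = ⟪vb, v₀⟫) (hγc : γc = ⟪vc, v₀⟫)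
    (hba : γa ∈ Set.Icc (-1/3 - ε) (-1/3 + ε))
    (hbb : γb ∈ Set.Icc (-1/3 - ε) (-1/3 + ε))
    (hbc : γc ∈ Set.Icc (-1/3 - ε) (-1/3 + ε))
    (ua ub uc : W)
    (hua : ua = (Real.sqrt (1 - γa ^ 2))⁻¹ • (va - γa • v₀))
    (hub : ub = (Real.sqrt (1 - γb ^ 2))⁻¹ • (vb - γb • v₀))
    (huc : uc = (Real.sqrt (1 - γc ^ 2))⁻¹ • (vc - γc • v₀)) :
    ‖ua + ub + uc‖ ^ 2 ≤ 18 * ε := by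
  have hsq_le : ∀ γ ∈ Set.Icc (-1/3 - ε) (-1/3 + ε), γ ^ 2 ≤ 1 / 2 := by
    rintro γ ⟨hlo, hhi⟩
    nlinarith
  have hsqrt_pos : ∀ γ ∈ Set.Icc (-1/3 - ε) (-1/3 + ε), 0 < √(1 - γ ^ 2) := fun γ hγ =>
    Real.sqrt_pos.2 (by linarith [hsq_le γ hγ])
  have hsqrt_dist : ∀ γ ∈ Set.Icc (-1/3 - ε) (-1/3 + ε), ∀ γ' ∈ Set.Icc (-1/3 - ε) (-1/3 + ε),
      |√(1 - γ ^ 2) - √(1 - γ' ^ 2)| ≤ 2 * ε := fun γ hγ γ' hγ' =>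
    (abs_sqrt_one_sub_sq_sub_le (hsq_le γ hγ) (hsq_le γ' hγ')).trans <| abs_sub_le_iff.2
      ⟨by linarith [hγ.2, hγ'.1], by linarith [hγ.1, hγ'.2]⟩
  have hnorm : ∀ v : W, ‖v‖ = 1 → ‖v - ⟪v, v₀⟫ • v₀‖ = √(1 - ⟪v, v₀⟫ ^ 2) := fun v hv => by
    rw [← one_pow 2, ← hv, ← norm_sub_inner_smul_sq hv₀, Real.sqrt_sq (norm_nonneg _)]
  have hw_sum : (va - γa • v₀) + (vb - γb • v₀) + (vc - γc • v₀) = 0 := by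
    subst hγa hγb hγc
    exact sub_inner_smul_add_add_eq_zero hv₀ hsum
  have hbound : ‖ua + ub + uc‖ * √(1 - γa ^ 2) ≤ 4 * ε := by
    have h := norm_inv_smul_add_add_le_of_add_add_eq_zero hw_sum (hsqrt_pos _ hba)
      (hsqrt_pos _ hbb) (hsqrt_pos _ hbc) (hγb ▸ hnorm vb hvb) (hγc ▸ hnorm vc hvc)
    rw [← hua, ← hub, ← huc, le_div_iff₀ (hsqrt_pos _ hba)] at h
    linarith [hsqrt_dist _ hba _ hbb, hsqrt_dist _ hba _ hbc]
  have hsa : 1 / 2 ≤ √(1 - γa ^ 2) ^ 2 := by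
    rw [Real.sq_sqrt (by linarith [hsq_le _ hba])]
    linarith [hsq_le _ hba]
  nlinarith [mul_le_mul hbound hbound (by positivity) (by positivity), norm_nonneg (ua + ub + uc)]

theorem balanced_orthogonal_components_sum_small
    {W : Type*} [NormedAddCommGroup W] [InnerProductSpace ℝ W]
    (va vb vc v₀ : W)
    (hva : ‖va‖ = 1) (hvb : ‖vb‖ = 1) (hvc : ‖vc‖ = 1) (hv₀ : ‖v₀‖ = 1)
    (hsum : va + vb + vc = -v₀)
    (ε : ℝ) (hε0 : 0 < ε) (hε : ε ≤ 1/4)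
    (γa γb γc : ℝ)
    (hγa : γa = ⟪va, v₀⟫) (hγb : γb = ⟪vb, v₀⟫) (hγc : γc = ⟪vc, v₀⟫)
    (hba : γa ∈ Set.Icc (-1/3 - ε) (-1/3 + ε))
    (hbb : γb ∈ Set.Icc (-1/3 - ε) (-1/3 + ε))
    (hbc : γc ∈ Set.Icc (-1/3 - ε) (-1/3 + ε))
    (ua ub uc : W)
    (hua : ua = (Real.sqrt (1 - γa ^ 2))⁻¹ • (va - γa • v₀))
    (hub : ub = (Real.sqrt (1 - γb ^ 2))⁻¹ • (vb - γb • v₀))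
    (huc : uc = (Real.sqrt (1 - γc ^ 2))⁻¹ • (vc - γc • v₀)) :
    ‖ua + ub + uc‖ ^ 2 ≤ 18 * ε :=
  balanced_orthogonal_components_sum_small_general va vb vc v₀ hvb hvc hv₀ hsum ε hε0 hε γa γb γc
    hγa hγb hγc hba hbb hbc ua ub uc hua hub huc
end

section
/- Let v_a, v_b, v_c, v_∅ be unit vectors in a real inner product space with v_a + v_b + v_c = −v_∅, and write γ_x = ⟨v_x, v_∅⟩ for x ∈ {a, b, c}. Let 0 < ε ≤ 1/4 and suppose γ_a, γ_b, γ_c ∈ [−1/3 − ε, −1/3 + ε]. For x ∈ {a, b, c} define the unit vector û_x = (v_x − γ_x v_∅)/√(1 − γ_x²). Then ⟨û_a, û_b⟩ ≤ −(1/2)(1 − 6ε). -/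
open scoped RealInnerProductSpace

private lemma balanced_aux (ε γa γb γc sa sb : ℝ)
    (hε0 : 0 < ε) (hε : ε ≤ 1/4)
    (hba1 : -1/3 - ε ≤ γa) (hba2 : γa ≤ -1/3 + ε)
    (hbb1 : -1/3 - ε ≤ γb) (hbb2 : γb ≤ -1/3 + ε)
    (hbc2 : γc ≤ -1/3 + ε)
    (hsa0 : 0 < sa) (hsb0 : 0 < sb)
    (hsa2 : sa ^ 2 = 1 - γa ^ 2) (hsb2 : sb ^ 2 = 1 - γb ^ 2) :
    sa⁻¹ * sb⁻¹ * (γc - γa * γb) ≤ -(1/2) * (1 - 6 * ε) := by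
  obtain ⟨t, ht⟩ : ∃ t : ℝ, t = 1/3 - ε := ⟨_, rfl⟩
  have ht0 : (0:ℝ) < t := by rw [ht]; linarith
  have hgat : γa ≤ -t := by rw [ht]; linarith
  have hgbt : γb ≤ -t := by rw [ht]; linarith
  have hgct : γc ≤ -t := by rw [ht]; linarith
  have hprod : t * t ≤ γa * γb := by
    have h := mul_le_mul (by linarith : t ≤ -γa) (by linarith : t ≤ -γb)
      ht0.le (by linarith : (0:ℝ) ≤ -γa)
    rwa [neg_mul_neg] at h
  have hta : t * t ≤ γa * γa := by
    have h := mul_le_mul (by linarith : t ≤ -γa) (by linarith : t ≤ -γa)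
      ht0.le (by linarith : (0:ℝ) ≤ -γa)
    rwa [neg_mul_neg] at h
  have htb : t * t ≤ γb * γb := by
    have h := mul_le_mul (by linarith : t ≤ -γb) (by linarith : t ≤ -γb)
      ht0.le (by linarith : (0:ℝ) ≤ -γb)
    rwa [neg_mul_neg] at h
  have hsaM : sa ^ 2 ≤ 1 - t ^ 2 := by rw [hsa2]; rw [sq, sq]; linarith
  have hsbM : sb ^ 2 ≤ 1 - t ^ 2 := by rw [hsb2]; rw [sq, sq]; linarith
  have hsab : sa * sb ≤ 1 - t ^ 2 := by
    have h2 := two_mul_le_add_sq sa sb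
    linarith
  have hsabpos : 0 < sa * sb := mul_pos hsa0 hsb0
  have key : γc - γa * γb ≤ (-(1/2) * (1 - 6 * ε)) * (sa * sb) := by
    have stepA : γc - γa * γb ≤ -t - t * t := by linarith
    rcases le_or_gt (1 - 6 * ε) 0 with h6 | h6
    · have hpos : 0 ≤ (-(1/2) * (1 - 6 * ε)) * (sa * sb) :=
        mul_nonneg (by linarith) hsabpos.le
      have htt := mul_pos ht0 ht0
      linarith
    · have ht3 : t ≤ 1/3 := by rw [ht]; linarith
      have hfac : (0:ℝ) ≤ (1 - 3 * t) * (1 - 2 * t) :=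
        mul_nonneg (by linarith) (by linarith)
      have stepB : -t - t * t ≤ (-(1/2) * (1 - 6 * ε)) * (1 - t ^ 2) := by
        have h6t : 1 - 6 * ε = 6 * t - 1 := by rw [ht]; ring
        rw [h6t]
        have hkey := mul_nonneg (by linarith : (0:ℝ) ≤ 1 + t) hfac
        linarith [hkey]
      have stepC : (-(1/2) * (1 - 6 * ε)) * (1 - t ^ 2) ≤
          (-(1/2) * (1 - 6 * ε)) * (sa * sb) := by
        have hkey := mul_nonneg h6.le (sub_nonneg.mpr hsab)
        linarith [hkey]
      linarith
  calc sa⁻¹ * sb⁻¹ * (γc - γa * γb)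
      = (γc - γa * γb) / (sa * sb) := by rw [div_eq_mul_inv, mul_inv]; ring
    _ ≤ (-(1/2) * (1 - 6 * ε)) := by
        rw [div_le_iff₀ hsabpos]; exact key

theorem balanced_orthogonal_components_inner_le
    {W : Type*} [NormedAddCommGroup W] [InnerProductSpace ℝ W]
    (va vb vc v₀ : W)
    (hva : ‖va‖ = 1) (hvb : ‖vb‖ = 1) (hvc : ‖vc‖ = 1) (hv₀ : ‖v₀‖ = 1)
    (hsum : va + vb + vc = -v₀)
    (ε : ℝ) (hε0 : 0 < ε) (hε : ε ≤ 1/4)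
    (γa γb γc : ℝ)
    (hγa : γa = ⟪va, v₀⟫) (hγb : γb = ⟪vb, v₀⟫) (hγc : γc = ⟪vc, v₀⟫)
    (hba : γa ∈ Set.Icc (-1/3 - ε) (-1/3 + ε))
    (hbb : γb ∈ Set.Icc (-1/3 - ε) (-1/3 + ε))
    (hbc : γc ∈ Set.Icc (-1/3 - ε) (-1/3 + ε))
    (ua ub uc : W)
    (hua : ua = (Real.sqrt (1 - γa ^ 2))⁻¹ • (va - γa • v₀))
    (hub : ub = (Real.sqrt (1 - γb ^ 2))⁻¹ • (vb - γb • v₀))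
    (huc : uc = (Real.sqrt (1 - γc ^ 2))⁻¹ • (vc - γc • v₀)) :
    ⟪ua, ub⟫ ≤ -(1/2) * (1 - 6 * ε) := by
  obtain ⟨hba1, hba2⟩ := hba
  obtain ⟨hbb1, hbb2⟩ := hbb
  obtain ⟨hbc1, hbc2⟩ := hbc
  have h00 : ⟪v₀, v₀⟫ = 1 := by
    rw [real_inner_self_eq_norm_mul_norm, hv₀]; ring
  have haa : ⟪va, va⟫ = 1 := by
    rw [real_inner_self_eq_norm_mul_norm, hva]; ring
  have hbb' : ⟪vb, vb⟫ = 1 := by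
    rw [real_inner_self_eq_norm_mul_norm, hvb]; ring
  have hcc : ⟪vc, vc⟫ = 1 := by
    rw [real_inner_self_eq_norm_mul_norm, hvc]; ring
  have hvc' : vc = -v₀ - va - vb := by rw [← hsum]; abel
  have hγc' : γc = -1 - γa - γb := by
    rw [hγc, hvc']
    simp [inner_sub_left, inner_neg_left, h00, hv₀, ← hγa, ← hγb]
  have hab : ⟪va, vb⟫ = γc := by
    have h := hcc
    rw [hvc'] at h
    simp only [inner_sub_left, inner_sub_right, inner_neg_left, inner_neg_right,
      h00, haa, hbb'] at h
    have hcomm : ⟪vb, va⟫ = ⟪va, vb⟫ := real_inner_comm _ _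
    have h0a : ⟪v₀, va⟫ = γa := by rw [hγa, real_inner_comm]
    have h0b : ⟪v₀, vb⟫ = γb := by rw [hγb, real_inner_comm]
    have ha0 : ⟪va, v₀⟫ = γa := hγa.symm
    have hb0 : ⟪vb, v₀⟫ = γb := hγb.symm
    rw [hcomm, h0a, h0b, ha0, hb0] at h
    rw [hγc']
    linarith
  set sa := Real.sqrt (1 - γa ^ 2) with hsa
  set sb := Real.sqrt (1 - γb ^ 2) with hsb
  have hga1 : (0:ℝ) < 1 - γa ^ 2 := by
    have h := mul_pos (by linarith : (0:ℝ) < 1 - γa) (by linarith : (0:ℝ) < 1 + γa)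
    linarith [h]
  have hgb1 : (0:ℝ) < 1 - γb ^ 2 := by
    have h := mul_pos (by linarith : (0:ℝ) < 1 - γb) (by linarith : (0:ℝ) < 1 + γb)
    linarith [h]
  have hsa0 : 0 < sa := Real.sqrt_pos.mpr hga1
  have hsb0 : 0 < sb := Real.sqrt_pos.mpr hgb1
  have hsa2 : sa ^ 2 = 1 - γa ^ 2 := Real.sq_sqrt hga1.le
  have hsb2 : sb ^ 2 = 1 - γb ^ 2 := Real.sq_sqrt hgb1.le
  have hinner : ⟪ua, ub⟫ = sa⁻¹ * sb⁻¹ * (γc - γa * γb) := by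
    rw [hua, hub]
    simp only [inner_smul_left, inner_smul_right, inner_sub_left, inner_sub_right,
      real_inner_smul_left, real_inner_smul_right, RCLike.conj_to_real, map_inv₀,
      conj_trivial]
    have h0b : ⟪v₀, vb⟫ = γb := by rw [hγb, real_inner_comm]
    rw [hab, h0b, ← hγa, h00]
    ring
  rw [hinner]
  exact balanced_aux ε γa γb γc sa sb hε0 hε hba1 hba2 hbb1 hbb2 hbc2 hsa0 hsb0 hsa2 hsb2
end

section
/- Let Φ̄(t) = P_{g∼N(0,1)}[g ≥ t] denote the standard Gaussian upper tail. Then for every t ≥ 1, Φ̄(2t) ≤ 512 · (ln(1/Φ̄(t)))^{3/2} · Φ̄(t)⁴. -/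
/-- The standard Gaussian upper tail `Φ̄(t) = P_{g ∼ N(0,1)}[g ≥ t]`. -/
noncomputable def gaussTail (t : ℝ) : ℝ :=
  ((ProbabilityTheory.gaussianReal 0 1) (Set.Ici t)).toReal

/-! The Mills-ratio bounds `t / (t² + 1) · φ(t) ≤ Φ̄(t) ≤ φ(t) / t` both come from the
identity `∫_t^∞ (1 + x⁻²) φ(x) dx = φ(t) / t`, as `(φ(x) / x)' = -(1 + x⁻²) φ(x)`.
Since `φ(t)⁴ = φ(2t) / (2π)^{3/2}`, the upper bound at `2t` and the lower bound at `t` give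
`Φ̄(2t) ≤ 8 (√(2π) t)³ Φ̄(t)⁴`, while `Φ̄(t) ≤ e^{-t²/2}` gives
`log (1 / Φ̄(t)) ≥ t² / 2`; the two meet with the constant `512` because `2π ≤ 8`. -/

open MeasureTheory ProbabilityTheory Filter Topology Real Set

namespace ProbabilityTheory

lemma gaussianPDFReal_zero_one (x : ℝ) :
    gaussianPDFReal 0 1 x = (√(2 * π))⁻¹ * exp (-x ^ 2 / 2) := by
  simp [gaussianPDFReal]

lemma hasDerivAt_gaussianPDFReal_zero_one (x : ℝ) :
    HasDerivAt (gaussianPDFReal 0 1) (-x * gaussianPDFReal 0 1 x) x := by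
  have hquad : HasDerivAt (fun y : ℝ ↦ -y ^ 2 / 2) (-x) x := by
    simpa [neg_div] using ((hasDerivAt_pow 2 x).div_const 2).fun_neg
  rw [funext gaussianPDFReal_zero_one]
  exact (hquad.exp.const_mul _).congr_deriv (by ring)

lemma tendsto_gaussianPDFReal_zero_one_atTop :
    Tendsto (gaussianPDFReal 0 1) atTop (𝓝 0) := by
  have hquad : Tendsto (fun x : ℝ ↦ -x ^ 2 / 2) atTop atBot :=
    (tendsto_neg_atTop_atBot.comp (tendsto_pow_atTop two_ne_zero)).atBot_div_const two_pos
  simpa [funext gaussianPDFReal_zero_one] using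
    (tendsto_exp_atBot.comp hquad).const_mul (√(2 * π))⁻¹

lemma integrableOn_one_add_inv_sq_mul_gaussianPDFReal {t : ℝ} (ht : 0 < t) :
    IntegrableOn (fun x ↦ (1 + (x ^ 2)⁻¹) * gaussianPDFReal 0 1 x) (Ioi t) := by
  refine ((integrable_gaussianPDFReal 0 1).const_mul (1 + (t ^ 2)⁻¹)).integrableOn.mono' ?_ ?_
  · refine ContinuousOn.aestronglyMeasurable ?_ measurableSet_Ioi
    have hcont : Continuous (gaussianPDFReal 0 1) := by
      rw [funext gaussianPDFReal_zero_one]; fun_prop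
    exact (continuousOn_const.add ((continuousOn_pow 2).inv₀ fun x hx ↦
      (pow_pos (ht.trans hx) 2).ne')).mul hcont.continuousOn
  · filter_upwards [ae_restrict_mem measurableSet_Ioi] with x hx
    have hφ := gaussianPDFReal_nonneg 0 1 x
    rw [norm_of_nonneg (by positivity)]
    gcongr
    exact hx.le

lemma integral_Ioi_one_add_inv_sq_mul_gaussianPDFReal {t : ℝ} (ht : 0 < t) :
    ∫ x in Ioi t, (1 + (x ^ 2)⁻¹) * gaussianPDFReal 0 1 x = gaussianPDFReal 0 1 t / t := by
  have hderiv : ∀ x ∈ Ici t, HasDerivAt (fun y ↦ gaussianPDFReal 0 1 y / y)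
      (-((1 + (x ^ 2)⁻¹) * gaussianPDFReal 0 1 x)) x := by
    intro x hx
    have hx0 : x ≠ 0 := (ht.trans_le hx).ne'
    refine ((hasDerivAt_gaussianPDFReal_zero_one x).div (hasDerivAt_id' x) hx0).congr_deriv ?_
    field_simp
    ring
  have hlim : Tendsto (fun y ↦ gaussianPDFReal 0 1 y / y) atTop (𝓝 0) :=
    tendsto_gaussianPDFReal_zero_one_atTop.div_atTop tendsto_id
  have hftc := integral_Ioi_of_hasDerivAt_of_tendsto' hderiv
    (integrableOn_one_add_inv_sq_mul_gaussianPDFReal ht).neg hlim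
  rw [integral_neg] at hftc
  linarith

end ProbabilityTheory

lemma gaussTail_eq_integral (t : ℝ) : gaussTail t = ∫ x in Ioi t, gaussianPDFReal 0 1 x := by
  rw [gaussTail, gaussianReal_apply_eq_integral 0 one_ne_zero, ENNReal.toReal_ofReal
    (setIntegral_nonneg measurableSet_Ici fun x _ ↦ gaussianPDFReal_nonneg 0 1 x),
    integral_Ici_eq_integral_Ioi]

lemma gaussTail_le_gaussianPDFReal_div {t : ℝ} (ht : 0 < t) :
    gaussTail t ≤ gaussianPDFReal 0 1 t / t := by
  rw [gaussTail_eq_integral, ← integral_Ioi_one_add_inv_sq_mul_gaussianPDFReal ht]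
  refine setIntegral_mono_on (integrable_gaussianPDFReal 0 1).integrableOn
    (integrableOn_one_add_inv_sq_mul_gaussianPDFReal ht) measurableSet_Ioi fun x _ ↦ ?_
  exact le_mul_of_one_le_left (gaussianPDFReal_nonneg 0 1 x)
    (le_add_of_nonneg_right (by positivity))

lemma div_mul_gaussianPDFReal_le_gaussTail {t : ℝ} (ht : 0 < t) :
    t / (t ^ 2 + 1) * gaussianPDFReal 0 1 t ≤ gaussTail t := by
  have hmono : gaussianPDFReal 0 1 t / t ≤ (1 + (t ^ 2)⁻¹) * gaussTail t := by
    rw [gaussTail_eq_integral, ← integral_const_mul,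
      ← integral_Ioi_one_add_inv_sq_mul_gaussianPDFReal ht]
    refine setIntegral_mono_on (integrableOn_one_add_inv_sq_mul_gaussianPDFReal ht)
      ((integrable_gaussianPDFReal 0 1).const_mul _).integrableOn measurableSet_Ioi
      fun x hx ↦ ?_
    have := gaussianPDFReal_nonneg 0 1 x
    gcongr
    exact hx.le
  calc t / (t ^ 2 + 1) * gaussianPDFReal 0 1 t
      = (gaussianPDFReal 0 1 t / t) / (1 + (t ^ 2)⁻¹) := by field_simp
    _ ≤ gaussTail t := by rwa [div_le_iff₀' (by positivity)]

lemma sq_div_two_le_log_inv_gaussTail {t : ℝ} (ht : 1 ≤ t) :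
    t ^ 2 / 2 ≤ log (1 / gaussTail t) := by
  have ht0 : 0 < t := by linarith
  have hpos : 0 < gaussTail t :=
    (mul_pos (by positivity) (gaussianPDFReal_pos 0 1 t one_ne_zero)).trans_le
      (div_mul_gaussianPDFReal_le_gaussTail ht0)
  have hle : gaussTail t ≤ exp (-t ^ 2 / 2) := by
    have hs : 1 ≤ √(2 * π) := one_le_sqrt.mpr (by linarith [pi_gt_three])
    calc gaussTail t ≤ gaussianPDFReal 0 1 t / t := gaussTail_le_gaussianPDFReal_div ht0
      _ ≤ gaussianPDFReal 0 1 t := div_le_self (gaussianPDFReal_nonneg 0 1 t) ht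
      _ ≤ exp (-t ^ 2 / 2) := by
        rw [gaussianPDFReal_zero_one]
        exact mul_le_of_le_one_left (exp_pos _).le (inv_le_one_of_one_le₀ hs)
  rw [one_div, log_inv, le_neg]
  simpa [neg_div] using log_le_log hpos hle

lemma gaussianPDFReal_zero_one_pow_four (x : ℝ) :
    gaussianPDFReal 0 1 x ^ 4 = gaussianPDFReal 0 1 (2 * x) / √(2 * π) ^ 3 := by
  rw [gaussianPDFReal_zero_one, gaussianPDFReal_zero_one, mul_pow, ← exp_nat_mul]
  field_simp
  ring_nf

lemma gaussianPDFReal_two_mul_div_le {t : ℝ} (ht : 0 < t) :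
    gaussianPDFReal 0 1 (2 * t) / (2 * t) ≤
      512 * (t ^ 2 / 2) ^ ((3 : ℝ) / 2) * (gaussianPDFReal 0 1 t / (2 * t)) ^ 4 := by
  have hr : (t ^ 2 / 2) ^ ((3 : ℝ) / 2) = √(t ^ 2 / 2) ^ 3 := by
    rw [sqrt_eq_rpow, ← rpow_mul_natCast (by positivity)]
    norm_num
  set s := √(2 * π)
  set r := √(t ^ 2 / 2)
  have hs : 0 < s := by positivity
  have hsq : (s * t) ^ 2 ≤ (4 * r) ^ 2 := by
    rw [mul_pow, mul_pow, sq_sqrt (by positivity), sq_sqrt (by positivity)]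
    nlinarith [pi_le_four]
  have hst : s * t ≤ 4 * r :=
    (pow_le_pow_iff_left₀ (by positivity) (by positivity) two_ne_zero).mp hsq
  have hφ := gaussianPDFReal_nonneg 0 1 (2 * t)
  rw [hr, div_pow, gaussianPDFReal_zero_one_pow_four]
  calc gaussianPDFReal 0 1 (2 * t) / (2 * t)
      = 8 * (s * t) ^ 3 * (gaussianPDFReal 0 1 (2 * t) / s ^ 3 / (2 * t) ^ 4) := by
        field_simp; ring
    _ ≤ 8 * (4 * r) ^ 3 * (gaussianPDFReal 0 1 (2 * t) / s ^ 3 / (2 * t) ^ 4) := by gcongr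
    _ = 512 * r ^ 3 * (gaussianPDFReal 0 1 (2 * t) / s ^ 3 / (2 * t) ^ 4) := by ring

theorem gaussian_tail_twice_t_bound (t : ℝ) (ht : 1 ≤ t) :
    gaussTail (2 * t) ≤
      512 * (Real.log (1 / gaussTail t)) ^ ((3 : ℝ) / 2) * (gaussTail t) ^ 4 := by
  have ht0 : 0 < t := by linarith
  have hlower : gaussianPDFReal 0 1 t / (2 * t) ≤ gaussTail t := by
    refine le_trans ?_ (div_mul_gaussianPDFReal_le_gaussTail ht0)
    rw [div_eq_inv_mul]
    gcongr
    · exact gaussianPDFReal_nonneg 0 1 t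
    · rw [inv_eq_one_div, div_le_div_iff₀ (by positivity) (by positivity)]
      nlinarith
  calc gaussTail (2 * t) ≤ gaussianPDFReal 0 1 (2 * t) / (2 * t) :=
        gaussTail_le_gaussianPDFReal_div (by positivity)
    _ ≤ 512 * (t ^ 2 / 2) ^ ((3 : ℝ) / 2) * (gaussianPDFReal 0 1 t / (2 * t)) ^ 4 :=
      gaussianPDFReal_two_mul_div_le ht0
    _ ≤ 512 * (Real.log (1 / gaussTail t)) ^ ((3 : ℝ) / 2) * (gaussTail t) ^ 4 := by
      have hlog := sq_div_two_le_log_inv_gaussTail ht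
      have := rpow_nonneg ((by positivity : (0 : ℝ) ≤ t ^ 2 / 2).trans hlog) ((3 : ℝ) / 2)
      have := gaussianPDFReal_nonneg 0 1 t
      gcongr
end
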